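/- arXiv:1903.10227 — 2 statements merged into one kernel-verified Lean document; each statement's English description precedes it below -/
import Mathlib

section
/- Let p > 1, let f, h : (0,∞) → ℝ be positive C³ functions, g ∈ C¹(0,∞), and let φ be a positive C² solution on (0,∞) of φ'' + (f'/f)φ' − gφ + hφ^p = 0. Define a(r) = f(r)^{2(p+1)/(p+3)} h(r)^{−2/(p+3)}, b(r) = −a'(r)/2 + (f'(r)/f(r)) a(r), c(r) = −b'(r) + (f'(r)/f(r)) b(r), G(r) = b(r)g(r) + c'(r)/2 − (a g)'(r)/2, and J(r) = (1/2)a(r)φ'(r)² + b(r)φ'(r)φ(r) + (1/2)c(r)φ(r)² − (1/2)a(r)g(r)φ(r)² + (1/(p+1))a(r)h(r)φ(r)^{p+1}. Then d/dr J(r) = G(r)φ(r)² for all r > 0. -/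
open Real Set

set_option maxHeartbeats 2000000 in
/-- Shioji–Watanabe generalized Pohožaev identity: for positive `C³` functions `f, h`,
`g ∈ C¹(0,∞)`, and a positive `C²` solution `φ` of `φ'' + (f'/f)φ' − gφ + hφ^p = 0`,
the Pohožaev function `J` satisfies `J' = G φ²` on `(0,∞)`. -/
theorem pohozaev_identity
    (p : ℝ) (hp : 1 < p)
    (f g h φ : ℝ → ℝ)
    (hf : ContDiffOn ℝ 3 f (Ioi 0)) (hh : ContDiffOn ℝ 3 h (Ioi 0))
    (hg : ContDiffOn ℝ 1 g (Ioi 0)) (hφ : ContDiffOn ℝ 2 φ (Ioi 0))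
    (hfpos : ∀ r ∈ Ioi (0:ℝ), 0 < f r) (hhpos : ∀ r ∈ Ioi (0:ℝ), 0 < h r)
    (hφpos : ∀ r ∈ Ioi (0:ℝ), 0 < φ r)
    (hode : ∀ r ∈ Ioi (0:ℝ),
      deriv (deriv φ) r + (deriv f r / f r) * deriv φ r - g r * φ r + h r * φ r ^ p = 0)
    (a b c G J : ℝ → ℝ)
    (ha : ∀ r, a r = f r ^ (2*(p+1)/(p+3)) * h r ^ (-2/(p+3)))
    (hb : ∀ r, b r = -(deriv a r)/2 + (deriv f r / f r) * a r)
    (hc : ∀ r, c r = -(deriv b r) + (deriv f r / f r) * b r)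
    (hG : ∀ r, G r = b r * g r + (deriv c r)/2 - (deriv (fun s => a s * g s) r)/2)
    (hJ : ∀ r, J r = (1/2) * a r * (deriv φ r)^2 + b r * deriv φ r * φ r
      + (1/2) * c r * φ r ^ 2 - (1/2) * a r * g r * φ r ^ 2
      + (1/(p+1)) * a r * h r * φ r ^ (p+1)) :
    ∀ r ∈ Ioi (0:ℝ), deriv J r = G r * φ r ^ 2 := by
  intro r hr
  have hmem : Ioi (0:ℝ) ∈ nhds r := isOpen_Ioi.mem_nhds hr
  have hf0 : f r ≠ 0 := (hfpos r hr).ne'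
  have hh0 : h r ≠ 0 := (hhpos r hr).ne'
  have hφ0 : φ r ≠ 0 := (hφpos r hr).ne'
  have hp1 : p + 1 ≠ 0 := by linarith
  have hp3 : p + 3 ≠ 0 := by linarith
  set α : ℝ := 2*(p+1)/(p+3) with hα
  set β : ℝ := -2/(p+3) with hβ
  -- basic differentiability
  have hf' : ContDiffOn ℝ 2 (deriv f) (Ioi 0) := hf.deriv_of_isOpen isOpen_Ioi (by norm_num)
  have hφ' : ContDiffOn ℝ 1 (deriv φ) (Ioi 0) := hφ.deriv_of_isOpen isOpen_Ioi (by norm_num)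
  -- a is C³ on (0,∞)
  have hA : ContDiffOn ℝ 3 a (Ioi 0) :=
    ((hf.rpow_const_of_ne (fun x hx => (hfpos x hx).ne')).mul
      (hh.rpow_const_of_ne (fun x hx => (hhpos x hx).ne'))).congr (fun x _ => ha x)
  -- b is C² on (0,∞)
  have hB : ContDiffOn ℝ 2 b (Ioi 0) := by
    have h1 : ContDiffOn ℝ 2 (fun x => -(deriv a x)/2 + (deriv f x / f x) * a x) (Ioi 0) :=
      (((hA.deriv_of_isOpen isOpen_Ioi (by norm_num)).neg.div_const 2).add
        ((hf'.div (hf.of_le (by norm_num)) (fun x hx => (hfpos x hx).ne')).mul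
          (hA.of_le (by norm_num))))
    exact h1.congr fun x _ => hb x
  -- c is C¹ on (0,∞)
  have hC : ContDiffOn ℝ 1 c (Ioi 0) := by
    have h1 : ContDiffOn ℝ 1 (fun x => -(deriv b x) + (deriv f x / f x) * b x) (Ioi 0) :=
      ((hB.deriv_of_isOpen isOpen_Ioi (by norm_num)).neg.add
        (((hf'.of_le (by norm_num)).div (hf.of_le (by norm_num))
            (fun x hx => (hfpos x hx).ne')).mul (hB.of_le (by norm_num))))
    exact h1.congr fun x _ => hc x
  -- HasDerivAt facts at r
  have Hf : HasDerivAt f (deriv f r) r :=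
    (((hf.differentiableOn (by norm_num)).differentiableAt hmem).hasDerivAt)
  have Hh : HasDerivAt h (deriv h r) r :=
    (((hh.differentiableOn (by norm_num)).differentiableAt hmem).hasDerivAt)
  have Hg : HasDerivAt g (deriv g r) r :=
    (((hg.differentiableOn (by norm_num)).differentiableAt hmem).hasDerivAt)
  have Hφ : HasDerivAt φ (deriv φ r) r :=
    (((hφ.differentiableOn (by norm_num)).differentiableAt hmem).hasDerivAt)
  have Hφ' : HasDerivAt (deriv φ) (deriv (deriv φ) r) r :=
    (((hφ'.differentiableOn (by norm_num)).differentiableAt hmem).hasDerivAt)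
  have Hb : HasDerivAt b (deriv b r) r :=
    (((hB.differentiableOn (by norm_num)).differentiableAt hmem).hasDerivAt)
  have Hc : HasDerivAt c (deriv c r) r :=
    (((hC.differentiableOn (by norm_num)).differentiableAt hmem).hasDerivAt)
  -- explicit derivative of a
  have Ha : HasDerivAt a
      (deriv f r * α * f r ^ (α - 1) * h r ^ β + f r ^ α * (deriv h r * β * h r ^ (β - 1))) r := by
    rw [funext ha]
    exact (Hf.rpow_const (Or.inl hf0)).mul (Hh.rpow_const (Or.inl hh0))
  have ha1 : deriv a r
      = deriv f r * α * f r ^ (α - 1) * h r ^ β + f r ^ α * (deriv h r * β * h r ^ (β - 1)) :=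
    Ha.deriv
  -- derivative of a*g
  have hag : deriv (fun s => a s * g s) r
      = (deriv f r * α * f r ^ (α - 1) * h r ^ β + f r ^ α * (deriv h r * β * h r ^ (β - 1)))
          * g r + a r * deriv g r :=
    (Ha.mul Hg).deriv
  have le1 : (1:ℝ) ≤ p + 1 := by linarith
  -- derivative of J
  have HJ' := ((((((Ha.const_mul ((1:ℝ)/2)).mul (Hφ'.pow 2)).add
      ((Hb.mul Hφ').mul Hφ)).add
      ((Hc.const_mul ((1:ℝ)/2)).mul (Hφ.pow 2))).sub
      (((Ha.const_mul ((1:ℝ)/2)).mul Hg).mul (Hφ.pow 2))).add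
      ((((Ha.const_mul (1/(p+1))).mul Hh).mul (Hφ.rpow_const (Or.inr le1)))))
  replace HJ' := HJ'.congr_of_eventuallyEq (f₁ := J) (Filter.Eventually.of_forall fun x => by rw [hJ x]; rfl)
  simp only [Pi.mul_apply, Pi.pow_apply, Pi.add_apply] at HJ'
  rename' HJ' => HJ
  rw [HJ.deriv, hG r, hag, hc r, hb r, ha1, ha r]
  -- ODE
  have hφ2 : deriv (deriv φ) r
      = g r * φ r - h r * φ r ^ p - (deriv f r / f r) * deriv φ r := by
    have := hode r hr; linarith
  rw [hφ2]
  -- rpow algebra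
  have e1 : f r ^ (α - 1) = f r ^ α / f r := Real.rpow_sub_one hf0 α
  have e2 : h r ^ (β - 1) = h r ^ β / h r := Real.rpow_sub_one hh0 β
  have e3 : p + 1 - 1 = p := by ring
  have e4 : φ r ^ (p + 1) = φ r ^ p * φ r := Real.rpow_add_one hφ0 p
  rw [e1, e2, e3, e4, hα, hβ]
  push_cast
  field_simp
  ring
end

section
/- Assume N = 1, γ > 0, 0 < α < 1, ω > ω₀, p > 1. Then the positive solution φ ∈ C[0,∞) ∩ C²(0,∞) of φ'' − (ω − γ r^{−α})φ + φ^p = 0, φ(0) > 0, satisfying φ(r) → 0 as r → ∞ and φ'(r) → 0 as r → 0⁺, is unique. -/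
open MeasureTheory Set

noncomputable section

/-- Classical Laplacian via second derivatives along coordinate directions. -/
def lapR (N : ℕ) (u : EuclideanSpace ℝ (Fin N) → ℝ) (x : EuclideanSpace ℝ (Fin N)) : ℝ :=
  ∑ i : Fin N, iteratedDeriv 2 (fun t : ℝ => u (x + t • EuclideanSpace.single i (1:ℝ))) 0

/-- `H¹`-type integrability: `u` and `‖∇u‖` square integrable. -/
def inH1R (N : ℕ) (u : EuclideanSpace ℝ (Fin N) → ℝ) : Prop :=
  MemLp u 2 volume ∧ MemLp (fun x => ‖fderiv ℝ u x‖) 2 volume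

/-- The action functional `S_ω` (real-valued functions). -/
def actionR (N : ℕ) (γ α ω p : ℝ) (u : EuclideanSpace ℝ (Fin N) → ℝ) : ℝ :=
  (1/2) * (∫ x : EuclideanSpace ℝ (Fin N), ‖fderiv ℝ u x‖^2)
    - (γ/2) * (∫ x : EuclideanSpace ℝ (Fin N), ‖u x‖^2 / ‖x‖^α)
    + (ω/2) * (∫ x : EuclideanSpace ℝ (Fin N), ‖u x‖^2)
    - (1/(p+1)) * (∫ x : EuclideanSpace ℝ (Fin N), ‖u x‖^(p+1))

/-- `u` solves `−Δu − γ|x|^{−α}u + ωu − |u|^{p−1}u = 0` (classically, away from the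
origin) and lies in `H¹`. -/
def isSolutionR (N : ℕ) (γ α ω p : ℝ) (u : EuclideanSpace ℝ (Fin N) → ℝ) : Prop :=
  inH1R N u ∧ ∀ x : EuclideanSpace ℝ (Fin N), x ≠ 0 →
    -lapR N u x - (γ / ‖x‖^α) * u x + ω * u x - |u x| ^ (p-1) * u x = 0

/-- Ground states: nontrivial solutions minimizing the action among nontrivial
solutions. -/
def isGroundStateR (N : ℕ) (γ α ω p : ℝ) (u : EuclideanSpace ℝ (Fin N) → ℝ) : Prop :=
  isSolutionR N γ α ω p u ∧ u ≠ 0 ∧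
    ∀ v, isSolutionR N γ α ω p v → v ≠ 0 → actionR N γ α ω p u ≤ actionR N γ α ω p v

/-- `−ω₀` is the bottom of the quadratic form of `−Δ − γ|x|^{−α}`. -/
def omega0R (N : ℕ) (γ α : ℝ) : ℝ :=
  - sInf ((fun u : EuclideanSpace ℝ (Fin N) → ℝ =>
      (∫ x : EuclideanSpace ℝ (Fin N), ‖fderiv ℝ u x‖^2)
        - γ * ∫ x : EuclideanSpace ℝ (Fin N), ‖u x‖^2 / ‖x‖^α) ''
    {u | inH1R N u ∧ (∫ x : EuclideanSpace ℝ (Fin N), ‖u x‖^2) = 1})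

/-- Positive solution of the 1d ODE `φ'' − (ω − γ r^{−α})φ + φ^p = 0`,
`φ ∈ C[0,∞) ∩ C²(0,∞)`, `φ(0) > 0`. -/
def isPosSol1d (γ α ω p : ℝ) (φ : ℝ → ℝ) : Prop :=
  ContinuousOn φ (Ici 0) ∧ ContDiffOn ℝ 2 φ (Ioi 0) ∧ 0 < φ 0 ∧
  (∀ r ∈ Ioi (0:ℝ), 0 < φ r) ∧
  (∀ r ∈ Ioi (0:ℝ), deriv (deriv φ) r - (ω - γ * r ^ (-α)) * φ r + φ r ^ p = 0)

namespace UniqAux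

open Filter Real Topology

/-- Energy function associated to a solution. -/
def EE (γ α ω p : ℝ) (u : ℝ → ℝ) (r : ℝ) : ℝ :=
  (deriv u r)^2/2 - (ω - γ * r ^ (-α)) * (u r)^2/2 + (u r)^(p+1)/(p+1)

/-- Bundled hypotheses on a solution. -/
structure Sol (γ α ω p : ℝ) (u : ℝ → ℝ) : Prop where
  cont : ContinuousOn u (Ici 0)
  cd : ContDiffOn ℝ 2 u (Ioi 0)
  pos : ∀ r : ℝ, 0 < r → 0 < u r
  ode : ∀ r : ℝ, 0 < r → deriv (deriv u) r - (ω - γ * r ^ (-α)) * u r + u r ^ p = 0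
  inf : Tendsto u atTop (nhds 0)
  d0 : Tendsto (deriv u) (nhdsWithin 0 (Ioi 0)) (nhds 0)

variable {γ α ω p : ℝ} {u φ ψ : ℝ → ℝ}

theorem Sol.du (hu : Sol γ α ω p u) {r : ℝ} (hr : 0 < r) : HasDerivAt u (deriv u r) r :=
  ((hu.cd.differentiableOn (by norm_num)).differentiableAt (Ioi_mem_nhds hr)).hasDerivAt

theorem Sol.cd1 (hu : Sol γ α ω p u) : ContDiffOn ℝ 1 (deriv u) (Ioi 0) :=
  hu.cd.deriv_of_isOpen isOpen_Ioi (by norm_num)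

theorem Sol.ddu (hu : Sol γ α ω p u) {r : ℝ} (hr : 0 < r) :
    HasDerivAt (deriv u) (deriv (deriv u) r) r :=
  ((hu.cd1.differentiableOn (by norm_num)).differentiableAt (Ioi_mem_nhds hr)).hasDerivAt

theorem Sol.cont_du (hu : Sol γ α ω p u) : ContinuousOn (deriv u) (Ioi 0) :=
  hu.cd1.continuousOn

theorem Sol.ode' (hu : Sol γ α ω p u) {r : ℝ} (hr : 0 < r) :
    deriv (deriv u) r = (ω - γ * r ^ (-α)) * u r - u r ^ p := by
  have := hu.ode r hr; linarith

theorem Sol.hasDerivAt_EE (hu : Sol γ α ω p u) (hp : 1 < p) {r : ℝ} (hr : 0 < r) :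
    HasDerivAt (EE γ α ω p u) (-(γ * α / 2) * r ^ (-α - 1) * (u r)^2) r := by
  have hdu := hu.du hr
  have hddu := hu.ddu hr
  have hpow : HasDerivAt (fun s : ℝ => s ^ (-α)) (-α * r ^ (-α - 1)) r :=
    Real.hasDerivAt_rpow_const (Or.inl hr.ne')
  have hg : HasDerivAt (fun s : ℝ => ω - γ * s ^ (-α)) (-(γ * (-α * r ^ (-α - 1)))) r :=
    (hpow.const_mul γ).const_sub ω
  have hfull := (((hddu.pow 2).div_const 2).sub
      ((hg.mul (hdu.pow 2)).div_const 2)).add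
      ((hdu.rpow_const (Or.inr (by linarith : (1:ℝ) ≤ p + 1))).div_const (p+1))
  have hfn : (EE γ α ω p u) = fun s => (deriv u s)^2/2 - (ω - γ * s ^ (-α)) * (u s)^2/2
      + (u s)^(p+1)/(p+1) := rfl
  rw [hfn]
  refine hfull.congr_deriv ?_
  have hode := hu.ode' hr
  have hexp : p + 1 - 1 = p := by ring
  rw [hexp, hode]
  have hp1 : p + 1 ≠ 0 := by linarith
  field_simp
  simp only [Pi.pow_apply]
  ring
theorem Sol.strictAntiOn_EE (hu : Sol γ α ω p u) (hγ : 0 < γ) (hα : 0 < α) (hp : 1 < p) :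
    StrictAntiOn (EE γ α ω p u) (Ioi 0) := by
  apply strictAntiOn_of_deriv_neg (convex_Ioi 0)
  · exact fun r hr => (hu.hasDerivAt_EE hp hr).continuousAt.continuousWithinAt
  · intro r hr
    rw [interior_Ioi] at hr
    rw [(hu.hasDerivAt_EE hp hr).deriv]
    have h1 : 0 < r ^ (-α - 1) := Real.rpow_pos_of_pos hr _
    have h2 : 0 < (u r)^2 := pow_pos (hu.pos r hr) 2
    have h3 : 0 < γ * α / 2 * r ^ (-α - 1) * (u r)^2 := by positivity
    linarith

theorem Sol.c_lim (hu : Sol γ α ω p u) (hα : 0 < α) (hp : 1 < p) :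
    Tendsto (fun r => -((ω - γ * r ^ (-α)) * (u r)^2/2) + (u r)^(p+1)/(p+1)) atTop (𝓝 0) := by
  have h1 : Tendsto (fun r : ℝ => r ^ (-α)) atTop (𝓝 0) := tendsto_rpow_neg_atTop hα
  have hg : Tendsto (fun r : ℝ => ω - γ * r ^ (-α)) atTop (𝓝 (ω - γ * 0)) :=
    tendsto_const_nhds.sub (h1.const_mul γ)
  have hu2 : Tendsto (fun r => (u r)^2) atTop (𝓝 0) := by
    simpa using hu.inf.pow 2
  have hup : Tendsto (fun r => (u r)^(p+1)) atTop (𝓝 0) := by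
    have hc : ContinuousAt (fun x : ℝ => x ^ (p+1)) 0 :=
      Real.continuousAt_rpow_const 0 (p+1) (Or.inr (by linarith))
    have := hc.tendsto.comp hu.inf
    simpa [Function.comp_def, Real.zero_rpow (show p+1 ≠ 0 by linarith)] using this
  have := (((hg.mul hu2).div_const 2).neg).add (hup.div_const (p+1))
  simpa using this

theorem Sol.EE_eq (hu : Sol γ α ω p u) (r : ℝ) :
    EE γ α ω p u r = (deriv u r)^2/2 + (-((ω - γ * r ^ (-α)) * (u r)^2/2) + (u r)^(p+1)/(p+1)) := by
  show (deriv u r)^2/2 - (ω - γ * r ^ (-α)) * (u r)^2/2 + (u r)^(p+1)/(p+1) = _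
  ring
theorem Sol.tendsto_atTop (hu : Sol γ α ω p u) (hγ : 0 < γ) (hα : 0 < α) (hp : 1 < p) :
    Tendsto (EE γ α ω p u) atTop (𝓝 0) ∧ Tendsto (deriv u) atTop (𝓝 0) := by
  have hanti := hu.strictAntiOn_EE hγ hα hp
  have hc := hu.c_lim hα hp
  set c : ℝ → ℝ := fun r => -((ω - γ * r ^ (-α)) * (u r)^2/2) + (u r)^(p+1)/(p+1) with hc_def
  have hEc : ∀ r, EE γ α ω p u r = (deriv u r)^2/2 + c r := fun r => hu.EE_eq r
  clear_value c
  obtain ⟨R₀, hR₀⟩ := eventually_atTop.mp (hc.eventually (eventually_gt_nhds (by norm_num : (-1:ℝ) < 0)))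
  -- lower bound for EE
  have hElb : ∀ r : ℝ, 0 < r → -1 ≤ EE γ α ω p u r := by
    intro r hr
    set s := max (max R₀ 1) (r+1) with hs_def
    have hss : r < s := lt_of_lt_of_le (lt_add_one r) (le_max_right _ _)
    have hspos : (0:ℝ) < s :=
      lt_of_lt_of_le one_pos (le_trans (le_max_right R₀ 1) (le_max_left _ _))
    have h1 : EE γ α ω p u s < EE γ α ω p u r := hanti hr hspos hss
    have h2 : -1 < c s := hR₀ s (le_trans (le_max_left R₀ 1) (le_max_left _ _))
    have h3 := hEc s
    clear_value s
    nlinarith [sq_nonneg (deriv u s)]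
  -- limit of EE at infinity
  set F : ℝ → ℝ := fun r => EE γ α ω p u (max r 1) with hF_def
  have hFanti : Antitone F := by
    intro a b hab
    exact hanti.antitoneOn (lt_of_lt_of_le one_pos (le_max_right a 1))
      (lt_of_lt_of_le one_pos (le_max_right b 1)) (max_le_max hab le_rfl)
  have hFbdd : BddBelow (range F) := by
    refine ⟨-1, ?_⟩
    rintro y ⟨r, rfl⟩
    exact hElb _ (lt_of_lt_of_le one_pos (le_max_right r 1))
  have hFlim := tendsto_atTop_ciInf hFanti hFbdd
  set L := ⨅ r, F r with hL_def
  have hEF : F =ᶠ[atTop] EE γ α ω p u :=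
    eventually_atTop.2 ⟨1, fun r hr => by simp only [hF_def, max_eq_left hr]⟩
  have hElim : Tendsto (EE γ α ω p u) atTop (𝓝 L) := hFlim.congr' hEF
  clear_value L
  clear hFlim hEF hFbdd hFanti hF_def hL_def
  have hsq : Tendsto (fun r => (deriv u r)^2) atTop (𝓝 (2*(L - 0))) := by
    have h := ((hElim.sub hc).const_mul 2)
    apply h.congr
    intro r
    have h2 := hEc r
    linarith
  rw [sub_zero] at hsq
  have hL0 : 0 ≤ 2*L := ge_of_tendsto hsq (Eventually.of_forall fun r => sq_nonneg _)
  have hLle : L ≤ 0 := by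
    by_contra hL
    push_neg at hL
    have hc₀pos : 0 < Real.sqrt L := Real.sqrt_pos.2 hL
    obtain ⟨R₁', hR₁'⟩ := eventually_atTop.mp (hsq.eventually (eventually_gt_nhds (by linarith : L < 2*L)))
    have hR₁pos : (0:ℝ) < max R₁' 1 := lt_of_lt_of_le one_pos (le_max_right _ _)
    have habs : ∀ r, max R₁' 1 ≤ r → Real.sqrt L < |deriv u r| := by
      intro r hr
      have h1 : L < (deriv u r)^2 := hR₁' r (le_trans (le_max_left _ _) hr)
      have h2 : (Real.sqrt L)^2 < |deriv u r|^2 := by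
        rw [Real.sq_sqrt hL.le, sq_abs]; exact h1
      exact lt_of_pow_lt_pow_left₀ 2 (abs_nonneg _) h2
    obtain ⟨R₁, hR₁pos, habs⟩ : ∃ R₁ : ℝ, (0 < R₁) ∧ ∀ r, R₁ ≤ r → Real.sqrt L < |deriv u r| :=
      ⟨max R₁' 1, hR₁pos, habs⟩
    set c₀ := Real.sqrt L with hc₀def
    clear_value c₀
    clear hc₀def hR₁'
    have hne : ∀ r, R₁ ≤ r → deriv u r ≠ 0 := by
      intro r hr h0
      have := habs r hr
      rw [h0] at this
      simp at this
      linarith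
    have hIoi : ∀ r : ℝ, R₁ ≤ r → (0:ℝ) < r := fun r hr => lt_of_lt_of_le hR₁pos hr
    rcases lt_or_gt_of_ne (hne R₁ le_rfl) with hneg | hpos
    · -- derivative negative for all r ≥ R₁
      have hallneg : ∀ r, R₁ ≤ r → deriv u r < -c₀ := by
        intro r hr
        have hltz : deriv u r < 0 := by
          rcases lt_or_gt_of_ne (hne r hr) with h | h
          · exact h
          · exfalso
            obtain ⟨t, ht, h0⟩ := intermediate_value_Icc hr
              (hu.cont_du.mono (fun x hx => hIoi x hx.1)) ⟨hneg.le, h.le⟩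
            exact hne t ht.1 h0
        have := habs r hr
        rw [abs_of_neg hltz] at this
        linarith
      have key : StrictAntiOn (fun r => u r + c₀ * r) (Ici R₁) := by
        apply strictAntiOn_of_deriv_neg (convex_Ici _)
        · intro x hx
          have hlin : HasDerivAt (fun r : ℝ => c₀ * r) c₀ x := by
            simpa using (hasDerivAt_id x).const_mul c₀
          exact ((hu.du (hIoi x hx)).add hlin).continuousAt.continuousWithinAt
        · intro x hx
          rw [interior_Ici] at hx
          have hlin : HasDerivAt (fun r : ℝ => c₀ * r) c₀ x := by
            simpa using (hasDerivAt_id x).const_mul c₀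
          rw [HasDerivAt.deriv (f := fun r => u r + c₀ * r) ((hu.du (hIoi x hx.le)).add hlin)]
          have := hallneg x hx.le
          linarith
      set r₂ := max (R₁ + u R₁ / c₀ + 1) (R₁ + 1) with hr₂def
      have hr₂gt : R₁ < r₂ := lt_of_lt_of_le (by linarith) (le_max_right _ _)
      have hge : R₁ + u R₁ / c₀ + 1 ≤ r₂ := le_max_left _ _
      clear_value r₂
      have h2 := key (self_mem_Ici) (mem_Ici.2 hr₂gt.le) hr₂gt
      have hmul : u R₁ + c₀ ≤ c₀ * (r₂ - R₁) := by
        have h5 : u R₁ / c₀ + 1 ≤ r₂ - R₁ := by linarith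
        have h3 : c₀ * (u R₁ / c₀ + 1) ≤ c₀ * (r₂ - R₁) :=
          mul_le_mul_of_nonneg_left h5 hc₀pos.le
        rw [mul_add, mul_div_cancel₀ _ hc₀pos.ne', mul_one] at h3
        linarith
      have hpos2 : 0 < u r₂ := hu.pos _ (hIoi _ hr₂gt.le)
      simp only at h2
      nlinarith
    · -- derivative positive for all r ≥ R₁
      have hallpos : ∀ r, R₁ ≤ r → c₀ < deriv u r := by
        intro r hr
        have hgtz : 0 < deriv u r := by
          rcases lt_or_gt_of_ne (hne r hr) with h | h
          · exfalso
            obtain ⟨t, ht, h0⟩ := intermediate_value_Icc' hr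
              (hu.cont_du.mono (fun x hx => hIoi x hx.1)) ⟨h.le, hpos.le⟩
            exact hne t ht.1 h0
          · exact h
        have := habs r hr
        rw [abs_of_pos hgtz] at this
        linarith
      have key : StrictMonoOn (fun r => u r - c₀ * r) (Ici R₁) := by
        apply strictMonoOn_of_deriv_pos (convex_Ici _)
        · intro x hx
          have hlin : HasDerivAt (fun r : ℝ => c₀ * r) c₀ x := by
            simpa using (hasDerivAt_id x).const_mul c₀
          exact ((hu.du (hIoi x hx)).sub hlin).continuousAt.continuousWithinAt
        · intro x hx
          rw [interior_Ici] at hx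
          have hlin : HasDerivAt (fun r : ℝ => c₀ * r) c₀ x := by
            simpa using (hasDerivAt_id x).const_mul c₀
          rw [HasDerivAt.deriv (f := fun r => u r - c₀ * r) ((hu.du (hIoi x hx.le)).sub hlin)]
          have := hallpos x hx.le
          linarith
      have hURpos : 0 < u R₁ := hu.pos _ hR₁pos
      obtain ⟨R₂, hR₂⟩ := eventually_atTop.mp (hu.inf.eventually (eventually_lt_nhds hURpos))
      set r₂ := max (R₁ + 1) R₂ with hr₂def
      have hr₂gt : R₁ < r₂ := lt_of_lt_of_le (by linarith) (le_max_left _ _)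
      have h3 : u r₂ < u R₁ := hR₂ _ (le_max_right _ _)
      clear_value r₂
      have h2 := key (self_mem_Ici) (mem_Ici.2 hr₂gt.le) hr₂gt
      simp only at h2
      nlinarith [mul_pos hc₀pos (sub_pos.2 hr₂gt)]
  have hLz : L = 0 := le_antisymm hLle (by linarith)
  rw [hLz] at hElim hsq
  refine ⟨hElim, ?_⟩
  rw [mul_zero] at hsq
  have habs : Tendsto (fun r => |deriv u r|) atTop (𝓝 0) := by
    have h := (Real.continuous_sqrt.tendsto 0).comp hsq
    simp only [Function.comp_def, Real.sqrt_sq_eq_abs, Real.sqrt_zero] at h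
    exact h
  exact (tendsto_zero_iff_abs_tendsto_zero _).2 habs

theorem Sol.EE_pos (hu : Sol γ α ω p u) (hγ : 0 < γ) (hα : 0 < α) (hp : 1 < p) :
    ∀ r : ℝ, 0 < r → 0 < EE γ α ω p u r := by
  intro r hr
  have hanti := hu.strictAntiOn_EE hγ hα hp
  have hElim := (hu.tendsto_atTop hγ hα hp).1
  have h1 : 0 ≤ EE γ α ω p u (r+1) := by
    apply le_of_tendsto hElim
    refine eventually_atTop.2 ⟨r+2, fun s hs => ?_⟩
    exact (hanti (mem_Ioi.2 (by linarith : (0:ℝ) < r+1)) (mem_Ioi.2 (by linarith : (0:ℝ) < s))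
      (by linarith : r+1 < s)).le
  exact lt_of_le_of_lt h1 (hanti (mem_Ioi.2 hr) (mem_Ioi.2 (by linarith : (0:ℝ) < r+1)) (lt_add_one r))
theorem Sol.cont_ddu (hu : Sol γ α ω p u) (hp : 1 < p) :
    ContinuousOn (deriv (deriv u)) (Ioi 0) := by
  have h : ContinuousOn (fun s : ℝ => (ω - γ * s ^ (-α)) * u s - u s ^ p) (Ioi 0) := by
    intro r hr
    have hr' : (0:ℝ) < r := hr
    have h1 : ContinuousAt (fun s : ℝ => s ^ (-α)) r :=
      Real.continuousAt_rpow_const r (-α) (Or.inl hr'.ne')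
    have h2 : ContinuousAt u r := (hu.du hr').continuousAt
    have h3 : ContinuousAt (fun s => u s ^ p) r := h2.rpow_const (Or.inr (by linarith))
    exact (((continuousAt_const.sub (h1.const_mul γ)).mul h2).sub h3).continuousWithinAt
  exact h.congr (fun r hr => hu.ode' hr)

theorem Sol.deriv_neg (hu : Sol γ α ω p u) (hγ : 0 < γ) (hα : 0 < α) (hp : 1 < p) :
    ∀ r : ℝ, 0 < r → deriv u r < 0 := by
  -- r ^ (-α) → ∞ as r → 0⁺
  have hrt : Tendsto (fun r : ℝ => r ^ (-α)) (nhdsWithin 0 (Ioi 0)) atTop := by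
    have h1 : Tendsto (fun r : ℝ => r ^ α) (nhdsWithin 0 (Ioi 0)) (nhdsWithin 0 (Ioi 0)) := by
      rw [tendsto_nhdsWithin_iff]
      constructor
      · have hc : ContinuousAt (fun r : ℝ => r ^ α) 0 :=
          Real.continuousAt_rpow_const 0 α (Or.inr hα.le)
        have := hc.tendsto.mono_left (nhdsWithin_le_nhds (s := Ioi (0:ℝ)))
        simpa [Real.zero_rpow hα.ne'] using this
      · exact eventually_nhdsWithin_of_forall (fun r hr => Real.rpow_pos_of_pos hr α)
    have h2 := Filter.Tendsto.inv_tendsto_nhdsGT_zero h1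
    apply h2.congr'
    refine eventually_nhdsWithin_of_forall (fun r hr => ?_)
    simp only [Pi.inv_apply]
    rw [← Real.rpow_neg (le_of_lt hr)]
  obtain ⟨ε, hε, hg⟩ : ∃ ε : ℝ, 0 < ε ∧ ∀ r ∈ Ioo (0:ℝ) ε, ω - γ * r ^ (-α) < 0 := by
    have hev : ∀ᶠ r in nhdsWithin 0 (Ioi (0:ℝ)), ω/γ < r ^ (-α) :=
      hrt.eventually (eventually_gt_atTop (ω/γ))
    obtain ⟨ε, hε, hsub⟩ :=
      (mem_nhdsGT_iff_exists_Ioo_subset' (show (0:ℝ) < 1 by norm_num)).mp hev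
    refine ⟨ε, hε, fun r hr => ?_⟩
    have h1 : ω/γ < r ^ (-α) := hsub hr
    have h2 : ω < r ^ (-α) * γ := (div_lt_iff₀ hγ).mp h1
    nlinarith
  have hddneg : ∀ r ∈ Ioo (0:ℝ) ε, deriv (deriv u) r < 0 := by
    intro r hr
    rw [hu.ode' hr.1]
    have h1 := hu.pos r hr.1
    have h2 : 0 < u r ^ p := Real.rpow_pos_of_pos h1 p
    have h3 := hg r hr
    nlinarith
  have hanti : StrictAntiOn (deriv u) (Ioo 0 ε) := by
    apply strictAntiOn_of_deriv_neg (convex_Ioo _ _)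
    · exact fun x hx => ((hu.ddu hx.1).continuousAt).continuousWithinAt
    · intro x hx; rw [interior_Ioo] at hx; exact hddneg x hx
  have hle : ∀ r ∈ Ioo (0:ℝ) ε, deriv u r ≤ 0 := by
    intro r hr
    have hev : ∀ᶠ s in nhdsWithin 0 (Ioi (0:ℝ)), deriv u r ≤ deriv u s := by
      filter_upwards [Ioo_mem_nhdsGT_of_mem (left_mem_Ico.2 hr.1)] with s hs
      exact (hanti ⟨hs.1, lt_trans hs.2 hr.2⟩ hr hs.2).le
    exact ge_of_tendsto hu.d0 hev
  have hlt : ∀ r ∈ Ioo (0:ℝ) ε, deriv u r < 0 := by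
    intro r hr
    have hhalf : r/2 ∈ Ioo (0:ℝ) ε := ⟨by linarith [hr.1], by linarith [hr.2, hr.1]⟩
    exact lt_of_lt_of_le (hanti hhalf hr (by linarith [hr.1])) (hle _ hhalf)
  intro b hb
  by_contra hge
  push_neg at hge
  rcases lt_or_ge b ε with hbe | hbe
  · exact absurd (hlt b ⟨hb, hbe⟩) (not_lt.2 hge)
  -- the first point where deriv u vanishes
  have hsub2 : Icc (ε/2) b ⊆ Ioi (0:ℝ) := fun x hx => lt_of_lt_of_le (by linarith) hx.1
  have hclosed : IsClosed (Icc (ε/2) b ∩ deriv u ⁻¹' (Ici 0)) :=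
    ContinuousOn.preimage_isClosed_of_isClosed (hu.cont_du.mono hsub2) isClosed_Icc isClosed_Ici
  have hne2 : (Icc (ε/2) b ∩ deriv u ⁻¹' (Ici 0)).Nonempty :=
    ⟨b, ⟨by constructor <;> linarith, hge⟩⟩
  have hbdd : BddBelow (Icc (ε/2) b ∩ deriv u ⁻¹' (Ici 0)) :=
    ⟨ε/2, fun x hx => hx.1.1⟩
  set t := sInf (Icc (ε/2) b ∩ deriv u ⁻¹' (Ici 0)) with ht_def
  have htT := hclosed.csInf_mem hne2 hbdd
  rw [← ht_def] at htT
  have ht0 : (0:ℝ) < t := lt_of_lt_of_le (by linarith) htT.1.1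
  have htdu : 0 ≤ deriv u t := htT.2
  have htε : ε ≤ t := by
    by_contra h
    push_neg at h
    exact absurd (hlt t ⟨ht0, h⟩) (not_lt.2 htdu)
  have hltt : ∀ r : ℝ, 0 < r → r < t → deriv u r < 0 := by
    intro r h0 hrt'
    rcases lt_or_ge r ε with h | h
    · exact hlt r ⟨h0, h⟩
    · by_contra hge2
      push_neg at hge2
      have hrT : r ∈ Icc (ε/2) b ∩ deriv u ⁻¹' (Ici 0) :=
        ⟨⟨by linarith, le_trans hrt'.le htT.1.2⟩, hge2⟩
      have := csInf_le hbdd hrT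
      rw [← ht_def] at this
      linarith
  have hdut : deriv u t = 0 := by
    refine le_antisymm ?_ htdu
    have hcd : Tendsto (deriv u) (nhdsWithin t (Iio t)) (nhds (deriv u t)) :=
      ((hu.ddu ht0).continuousAt).continuousWithinAt
    refine le_of_tendsto hcd ?_
    filter_upwards [Ioo_mem_nhdsLT_of_mem (⟨ht0, le_rfl⟩ : t ∈ Ioc (0:ℝ) t)] with s hs
    exact (hltt s hs.1 hs.2).le
  have hE := hu.EE_pos hγ hα hp t ht0
  have hut : 0 < u t := hu.pos t ht0
  have hddt : deriv (deriv u) t < 0 := by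
    rw [hu.ode' ht0]
    have hEt : EE γ α ω p u t
        = -((ω - γ * t ^ (-α)) * (u t)^2/2) + (u t)^(p+1)/(p+1) := by
      have h := hu.EE_eq t
      rw [hdut] at h
      simpa using h
    have hA : 0 < (u t)^(p+1) := Real.rpow_pos_of_pos hut _
    have hup : 0 < u t ^ p := Real.rpow_pos_of_pos hut p
    rcases le_or_gt (ω - γ * t ^ (-α)) 0 with hgle | hggt
    · nlinarith
    · have hup1 : (u t)^(p+1) = (u t)^p * u t := Real.rpow_add_one hut.ne' p
      have h4 : (ω - γ * t ^ (-α)) * (u t)^2/2 < (u t)^(p+1)/(p+1) := by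
        rw [hEt] at hE
        linarith
      have h6 : (u t)^(p+1)/(p+1) * 2 < (u t)^(p+1) := by
        rw [div_mul_eq_mul_div, div_lt_iff₀ (by linarith : (0:ℝ) < p+1)]
        nlinarith
      have h5 : (ω - γ * t ^ (-α)) * (u t)^2 < (u t)^(p+1) := by linarith
      have h7 : (ω - γ * t ^ (-α)) * u t * u t < u t ^ p * u t := by nlinarith
      have h8 : (ω - γ * t ^ (-α)) * u t < u t ^ p := lt_of_mul_lt_mul_right h7 hut.le
      linarith
  have hcont2 : ContinuousAt (deriv (deriv u)) t :=
    (hu.cont_ddu hp).continuousAt (Ioi_mem_nhds ht0)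
  have hev2 : ∀ᶠ s in nhds t, deriv (deriv u) s < 0 :=
    hcont2.eventually (eventually_lt_nhds hddt)
  obtain ⟨δ, hδ, hball⟩ := Metric.eventually_nhds_iff.mp hev2
  have hat : max (t - δ) (t/2) < t := max_lt (by linarith) (by linarith)
  have ha0 : (0:ℝ) < max (t - δ) (t/2) := lt_of_lt_of_le (by linarith) (le_max_right _ _)
  have hanti2 : StrictAntiOn (deriv u) (Ioo (max (t - δ) (t/2)) (t+δ)) := by
    apply strictAntiOn_of_deriv_neg (convex_Ioo _ _)
    · intro x hx
      exact ((hu.ddu (lt_trans ha0 hx.1)).continuousAt).continuousWithinAt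
    · intro x hx
      rw [interior_Ioo] at hx
      apply hball
      rw [Real.dist_eq, abs_sub_lt_iff]
      constructor
      · linarith [hx.2]
      · have := lt_of_le_of_lt (le_max_left (t-δ) (t/2)) hx.1
        linarith
  have hmid : (max (t - δ) (t/2) + t)/2 ∈ Ioo (max (t - δ) (t/2)) (t+δ) :=
    ⟨by linarith, by linarith⟩
  have htmem : t ∈ Ioo (max (t - δ) (t/2)) (t+δ) := ⟨hat, by linarith⟩
  have h9 : deriv u t < deriv u ((max (t - δ) (t/2) + t)/2) :=
    hanti2 hmid htmem (by linarith)
  have h10 := hltt ((max (t - δ) (t/2) + t)/2) (by linarith) (by linarith)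
  rw [hdut] at h9
  linarith
/-- Wronskian of two solutions. -/
def WW (φ ψ : ℝ → ℝ) (r : ℝ) : ℝ := deriv φ r * ψ r - φ r * deriv ψ r

theorem hasDerivAt_WW (hφ : Sol γ α ω p φ) (hψ : Sol γ α ω p ψ) {r : ℝ} (hr : 0 < r) :
    HasDerivAt (WW φ ψ) (φ r * ψ r ^ p - ψ r * φ r ^ p) r := by
  have h := (((hφ.ddu hr).mul (hψ.du hr))).sub ((hφ.du hr).mul (hψ.ddu hr))
  have hfn : WW φ ψ = fun s => deriv φ s * ψ s - φ s * deriv ψ s := rfl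
  rw [hfn]
  refine h.congr_deriv ?_
  rw [hφ.ode' hr, hψ.ode' hr]
  ring

theorem WW_deriv_neg (hφ : Sol γ α ω p φ) (hψ : Sol γ α ω p ψ) (hp : 1 < p)
    {r : ℝ} (hr : 0 < r) (hlt : ψ r < φ r) :
    φ r * ψ r ^ p - ψ r * φ r ^ p < 0 := by
  have hψ0 := hψ.pos r hr
  have hφ0 := hφ.pos r hr
  have h1 : ψ r ^ (p-1) < φ r ^ (p-1) :=
    Real.rpow_lt_rpow hψ0.le hlt (by linarith)
  have h2 : φ r ^ p = φ r ^ (p-1) * φ r := by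
    rw [← Real.rpow_add_one hφ0.ne' (p-1)]; norm_num
  have h3 : ψ r ^ p = ψ r ^ (p-1) * ψ r := by
    rw [← Real.rpow_add_one hψ0.ne' (p-1)]; norm_num
  rw [h2, h3]
  nlinarith [mul_pos hφ0 hψ0]

theorem nocross (hφ : Sol γ α ω p φ) (hψ : Sol γ α ω p ψ)
    (hγ : 0 < γ) (hα : 0 < α) (hp : 1 < p)
    (hlt : ∀ r : ℝ, 0 < r → ψ r < φ r) : False := by
  have hanti : StrictAntiOn (WW φ ψ) (Ioi 0) := by
    apply strictAntiOn_of_deriv_neg (convex_Ioi 0)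
    · exact fun r hr => (hasDerivAt_WW hφ hψ hr).continuousAt.continuousWithinAt
    · intro r hr
      rw [interior_Ioi] at hr
      rw [(hasDerivAt_WW hφ hψ hr).deriv]
      exact WW_deriv_neg hφ hψ hp hr (hlt r hr)
  have hφc : Tendsto φ (nhdsWithin 0 (Ioi 0)) (nhds (φ 0)) :=
    (hφ.cont 0 self_mem_Ici).mono_left (nhdsWithin_mono _ Ioi_subset_Ici_self)
  have hψc : Tendsto ψ (nhdsWithin 0 (Ioi 0)) (nhds (ψ 0)) :=
    (hψ.cont 0 self_mem_Ici).mono_left (nhdsWithin_mono _ Ioi_subset_Ici_self)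
  have hW0 : Tendsto (WW φ ψ) (nhdsWithin 0 (Ioi 0)) (nhds 0) := by
    have := (hφ.d0.mul hψc).sub (hφc.mul hψ.d0)
    show Tendsto (fun r => deriv φ r * ψ r - φ r * deriv ψ r) _ _
    simpa [WW] using this
  have hWinf : Tendsto (WW φ ψ) atTop (nhds 0) := by
    have h1 := (hφ.tendsto_atTop hγ hα hp).2
    have h2 := (hψ.tendsto_atTop hγ hα hp).2
    have := (h1.mul hψ.inf).sub (hφ.inf.mul h2)
    show Tendsto (fun r => deriv φ r * ψ r - φ r * deriv ψ r) _ _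
    simpa [WW] using this
  have hW1 : WW φ ψ 1 ≤ 0 := by
    refine ge_of_tendsto hW0 ?_
    filter_upwards [Ioo_mem_nhdsGT_of_mem (left_mem_Ico.2 one_pos)] with s hs
    exact (hanti (mem_Ioi.2 hs.1) (mem_Ioi.2 one_pos) hs.2).le
  have hW2 : 0 ≤ WW φ ψ 2 := by
    refine le_of_tendsto hWinf ?_
    filter_upwards [eventually_gt_atTop 2] with s hs
    exact (hanti (mem_Ioi.2 two_pos) (mem_Ioi.2 (lt_trans two_pos hs)) hs).le
  have := hanti (mem_Ioi.2 one_pos) (mem_Ioi.2 two_pos) one_lt_two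
  linarith
/-- Difference of energies. -/
def DD (γ α ω p : ℝ) (φ ψ : ℝ → ℝ) (r : ℝ) : ℝ := EE γ α ω p φ r - EE γ α ω p ψ r

theorem hasDerivAt_DD (hφ : Sol γ α ω p φ) (hψ : Sol γ α ω p ψ) (hp : 1 < p)
    {r : ℝ} (hr : 0 < r) :
    HasDerivAt (DD γ α ω p φ ψ)
      (-(γ * α / 2) * r ^ (-α - 1) * (φ r)^2 - -(γ * α / 2) * r ^ (-α - 1) * (ψ r)^2) r := by
  have h := (hφ.hasDerivAt_EE hp hr).sub (hψ.hasDerivAt_EE hp hr)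
  exact h

theorem DD_deriv_pos (hφ : Sol γ α ω p φ) (hψ : Sol γ α ω p ψ)
    (hγ : 0 < γ) (hα : 0 < α) (hp : 1 < p)
    {r : ℝ} (hr : 0 < r) (h : φ r < ψ r) :
    0 < deriv (DD γ α ω p φ ψ) r := by
  rw [(hasDerivAt_DD hφ hψ hp hr).deriv]
  have h1 : 0 < r ^ (-α - 1) := Real.rpow_pos_of_pos hr _
  have h2 := hφ.pos r hr
  have h3 : 0 < γ * α / 2 * r ^ (-α - 1) := by positivity
  have h4 : 0 < ψ r := lt_trans h2 h
  have h5 : φ r ^ 2 < ψ r ^ 2 := by nlinarith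
  nlinarith [mul_pos h3 (sub_pos.2 h5)]

theorem DD_tendsto (hφ : Sol γ α ω p φ) (hψ : Sol γ α ω p ψ)
    (hγ : 0 < γ) (hα : 0 < α) (hp : 1 < p) :
    Tendsto (DD γ α ω p φ ψ) atTop (nhds 0) := by
  have := ((hφ.tendsto_atTop hγ hα hp).1).sub ((hψ.tendsto_atTop hγ hα hp).1)
  show Tendsto (fun r => EE γ α ω p φ r - EE γ α ω p ψ r) _ _
  simpa [DD] using this

theorem DD_cross (hφ : Sol γ α ω p φ) (hψ : Sol γ α ω p ψ)
    {r : ℝ} (h : φ r = ψ r) :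
    DD γ α ω p φ ψ r = ((deriv φ r)^2 - (deriv ψ r)^2)/2 := by
  have h1 := hφ.EE_eq r
  have h2 := hψ.EE_eq r
  have : DD γ α ω p φ ψ r = EE γ α ω p φ r - EE γ α ω p ψ r := rfl
  rw [this, h1, h2, h]
  ring

theorem cross (hφ : Sol γ α ω p φ) (hψ : Sol γ α ω p ψ)
    (hγ : 0 < γ) (hα : 0 < α) (hp : 1 < p)
    {r₀ : ℝ} (hr₀ : 0 < r₀) (heq : φ r₀ = ψ r₀) (hd : deriv φ r₀ < deriv ψ r₀)
    (hnt : ∀ r : ℝ, 0 < r → φ r = ψ r → deriv φ r ≠ deriv ψ r) : False := by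
  have hψd := hψ.deriv_neg hγ hα hp r₀ hr₀
  have hD0 : 0 < DD γ α ω p φ ψ r₀ := by
    rw [DD_cross hφ hψ heq]
    nlinarith [mul_pos (by linarith : 0 < deriv ψ r₀ - deriv φ r₀)
      (by linarith : 0 < -(deriv ψ r₀) - deriv φ r₀)]
  have hDinf := DD_tendsto hφ hψ hγ hα hp
  have hδcont : ∀ x : ℝ, 0 < x → ContinuousAt (fun r => φ r - ψ r) x :=
    fun x hx => ((hφ.du hx).continuousAt).sub ((hψ.du hx).continuousAt)
  -- difference is negative just to the right of r₀
  obtain ⟨ε, hε, hright⟩ : ∃ ε : ℝ, 0 < ε ∧ ∀ r ∈ Ioo r₀ (r₀+ε), φ r - ψ r < 0 := by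
    have hδd : HasDerivAt (fun r => φ r - ψ r) (deriv φ r₀ - deriv ψ r₀) r₀ :=
      (hφ.du hr₀).sub (hψ.du hr₀)
    have hslope := hasDerivAt_iff_tendsto_slope.mp hδd
    have hneg : deriv φ r₀ - deriv ψ r₀ < 0 := by linarith
    have hev : ∀ᶠ r in nhdsWithin r₀ {r₀}ᶜ, slope (fun r => φ r - ψ r) r₀ r < 0 :=
      hslope.eventually (eventually_lt_nhds hneg)
    have hev2 : ∀ᶠ r in nhdsWithin r₀ (Ioi r₀), slope (fun r => φ r - ψ r) r₀ r < 0 :=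
      hev.filter_mono (nhdsWithin_mono _ (fun x hx => ne_of_gt hx))
    obtain ⟨b, hb, hsub⟩ :=
      (mem_nhdsGT_iff_exists_Ioo_subset' (lt_add_one r₀)).mp hev2
    refine ⟨b - r₀, by simpa using (mem_Ioi.1 hb), fun r hr => ?_⟩
    have h1 : slope (fun s => φ s - ψ s) r₀ r < 0 := hsub ⟨hr.1, by linarith [hr.2]⟩
    rw [slope_def_field] at h1
    have h2 : φ r₀ - ψ r₀ = 0 := by rw [heq]; ring
    have h3 : 0 < r - r₀ := by linarith [hr.1]
    rw [h2, sub_zero] at h1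
    rcases div_neg_iff.mp h1 with ⟨ha, hb'⟩ | ⟨ha, hb'⟩
    · linarith
    · exact ha
  by_cases hA : ∃ r : ℝ, r₀ < r ∧ φ r = ψ r
  · -- there is a further crossing; take the first one
    have hzero_ge : ∀ r : ℝ, r₀ < r → φ r = ψ r → r₀ + ε ≤ r := by
      intro r hr h
      by_contra hlt
      push_neg at hlt
      have := hright r ⟨hr, hlt⟩
      rw [h] at this
      simp at this
    have hS : ∀ r : ℝ, r₀ < r → φ r = ψ r →
        r ∈ Ici (r₀ + ε) ∩ (fun r => φ r - ψ r) ⁻¹' {0} := by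
      intro r hr h
      exact ⟨hzero_ge r hr h, by simp [h]⟩
    have hsubIoi : Ici (r₀ + ε) ⊆ Ioi (0:ℝ) := fun x hx => lt_of_lt_of_le (by linarith : (0:ℝ) < r₀ + ε) hx
    have hclosed : IsClosed (Ici (r₀ + ε) ∩ (fun r => φ r - ψ r) ⁻¹' {0}) := by
      apply ContinuousOn.preimage_isClosed_of_isClosed
        (fun x hx => (hδcont x (hsubIoi hx)).continuousWithinAt) isClosed_Ici isClosed_singleton
    obtain ⟨ra, hra1, hra2⟩ := hA
    have hne : (Ici (r₀ + ε) ∩ (fun r => φ r - ψ r) ⁻¹' {0}).Nonempty :=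
      ⟨ra, hS ra hra1 hra2⟩
    have hbdd : BddBelow (Ici (r₀ + ε) ∩ (fun r => φ r - ψ r) ⁻¹' {0}) :=
      ⟨r₀ + ε, fun x hx => hx.1⟩
    have htT := hclosed.csInf_mem hne hbdd
    set r₁ := sInf (Ici (r₀ + ε) ∩ (fun r => φ r - ψ r) ⁻¹' {0}) with hr₁_def
    have hr₁ge : r₀ + ε ≤ r₁ := htT.1
    have hr₁pos : 0 < r₁ := lt_of_lt_of_le (by linarith) hr₁ge
    have hr₁gt : r₀ < r₁ := by linarith
    have heq1 : φ r₁ = ψ r₁ := by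
      have h := htT.2
      simp only [mem_preimage, mem_singleton_iff] at h
      linarith [h]
    -- difference negative strictly between r₀ and r₁
    have hneg2 : ∀ r : ℝ, r₀ < r → r < r₁ → φ r - ψ r < 0 := by
      intro r hr hrr₁
      rcases lt_or_ge r (r₀ + ε) with h | h
      · exact hright r ⟨hr, h⟩
      · rcases lt_trichotomy (φ r - ψ r) 0 with h' | h' | h'
        · exact h'
        · exfalso
          have : r ∈ Ici (r₀ + ε) ∩ (fun r => φ r - ψ r) ⁻¹' {0} := ⟨h, by simp [h']⟩
          have := csInf_le hbdd this
          rw [← hr₁_def] at this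
          linarith
        · exfalso
          -- IVT between r₀ + ε/2 and r
          have hm : r₀ + ε/2 ≤ r := by linarith
          have hmneg : φ (r₀ + ε/2) - ψ (r₀ + ε/2) < 0 :=
            hright _ ⟨by linarith, by linarith⟩
          have hcont : ContinuousOn (fun s => φ s - ψ s) (Icc (r₀ + ε/2) r) :=
            fun x hx => (hδcont x (by linarith [hx.1])).continuousWithinAt
          obtain ⟨c, hc, hc0⟩ := intermediate_value_Icc hm hcont
            (⟨hmneg.le, h'.le⟩ : (0:ℝ) ∈ Icc _ _)
          simp only at hc0
          have hcgt : r₀ < c := by linarith [hc.1]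
          have hceq : φ c = ψ c := by linarith [hc0]
          have := csInf_le hbdd (hS c hcgt hceq)
          rw [← hr₁_def] at this
          linarith [hc.2]
    -- derivative of the difference at r₁ is positive
    have hd1ne := hnt r₁ hr₁pos heq1
    have hd1 : 0 < deriv φ r₁ - deriv ψ r₁ := by
      have hδd1 : HasDerivAt (fun r => φ r - ψ r) (deriv φ r₁ - deriv ψ r₁) r₁ :=
        (hφ.du hr₁pos).sub (hψ.du hr₁pos)
      have hslope := hasDerivAt_iff_tendsto_slope.mp hδd1
      have hslope2 : Tendsto (slope (fun r => φ r - ψ r) r₁) (nhdsWithin r₁ (Iio r₁))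
          (nhds (deriv φ r₁ - deriv ψ r₁)) :=
        hslope.mono_left (nhdsWithin_mono _ (fun x hx => ne_of_lt hx))
      have hge : 0 ≤ deriv φ r₁ - deriv ψ r₁ := by
        refine ge_of_tendsto hslope2 ?_
        filter_upwards [Ioo_mem_nhdsLT_of_mem (⟨hr₁gt, le_refl r₁⟩ : r₁ ∈ Ioc r₀ r₁)]
          with s hs
        rw [slope_def_field]
        have h2 : φ r₁ - ψ r₁ = 0 := by rw [heq1]; ring
        have hδs : φ s - ψ s < 0 := hneg2 s hs.1 hs.2
        have hds : s - r₁ < 0 := by linarith [hs.2]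
        exact (div_pos_of_neg_of_neg (by linarith) hds).le
      exact lt_of_le_of_ne hge (Ne.symm (sub_ne_zero.2 hd1ne))
    have hφd1 := hφ.deriv_neg hγ hα hp r₁ hr₁pos
    have hD1 : DD γ α ω p φ ψ r₁ < 0 := by
      rw [DD_cross hφ hψ heq1]
      nlinarith [mul_pos (by linarith : 0 < deriv φ r₁ - deriv ψ r₁)
        (by linarith : 0 < -(deriv φ r₁) - deriv ψ r₁)]
    have hmono : StrictMonoOn (DD γ α ω p φ ψ) (Icc r₀ r₁) := by
      apply strictMonoOn_of_deriv_pos (convex_Icc _ _)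
      · intro x hx
        have hx0 : 0 < x := lt_of_lt_of_le hr₀ hx.1
        exact (hasDerivAt_DD hφ hψ hp hx0).continuousAt.continuousWithinAt
      · intro x hx
        rw [interior_Icc] at hx
        have hx0 : 0 < x := lt_trans hr₀ hx.1
        exact DD_deriv_pos hφ hψ hγ hα hp hx0 (by linarith [hneg2 x hx.1 hx.2])
    have := hmono (left_mem_Icc.2 hr₁gt.le) (right_mem_Icc.2 hr₁gt.le) hr₁gt
    linarith
  · push_neg at hA
    have hneg2 : ∀ r : ℝ, r₀ < r → φ r - ψ r < 0 := by
      intro r hr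
      rcases lt_or_ge r (r₀ + ε) with h | h
      · exact hright r ⟨hr, h⟩
      · rcases lt_trichotomy (φ r - ψ r) 0 with h' | h' | h'
        · exact h'
        · exact absurd (by linarith : φ r = ψ r) (hA r hr)
        · exfalso
          have hm : r₀ + ε/2 ≤ r := by linarith
          have hmneg : φ (r₀ + ε/2) - ψ (r₀ + ε/2) < 0 := hright _ ⟨by linarith, by linarith⟩
          have hcont : ContinuousOn (fun s => φ s - ψ s) (Icc (r₀ + ε/2) r) :=
            fun x hx => (hδcont x (by linarith [hx.1])).continuousWithinAt
          obtain ⟨c, hc, hc0⟩ := intermediate_value_Icc hm hcont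
            (⟨hmneg.le, h'.le⟩ : (0:ℝ) ∈ Icc _ _)
          simp only at hc0
          exact hA c (by linarith [hc.1]) (by linarith [hc0])
    have hmono : StrictMonoOn (DD γ α ω p φ ψ) (Ici r₀) := by
      apply strictMonoOn_of_deriv_pos (convex_Ici _)
      · intro x hx
        exact (hasDerivAt_DD hφ hψ hp (lt_of_lt_of_le hr₀ hx)).continuousAt.continuousWithinAt
      · intro x hx
        rw [interior_Ici] at hx
        exact DD_deriv_pos hφ hψ hγ hα hp (lt_trans hr₀ hx) (by linarith [hneg2 x hx])
    have hD1le : DD γ α ω p φ ψ (r₀+1) ≤ 0 := by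
      refine ge_of_tendsto hDinf ?_
      filter_upwards [eventually_gt_atTop (r₀+1)] with s hs
      exact (hmono (mem_Ici.2 (by linarith : r₀ ≤ r₀ + 1)) (mem_Ici.2 (by linarith : r₀ ≤ s)) hs).le
    have := hmono self_mem_Ici (mem_Ici.2 (by linarith)) (lt_add_one r₀)
    linarith
theorem abs_sub_le'' (a b : ℝ) : |a - b| ≤ |a| + |b| := by
  calc |a - b| = |a + -b| := by rw [sub_eq_add_neg]
    _ ≤ |a| + |-b| := abs_add_le _ _
    _ = |a| + |b| := by rw [abs_neg]

/-- The vector field of the first-order system. -/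
def vf (γ α ω p : ℝ) : ℝ → ℝ × ℝ → ℝ × ℝ :=
  fun t x => (x.2, (ω - γ * t ^ (-α)) * x.1 - x.1 ^ p)

/-- Time-dependent domain for the Lipschitz estimate. -/
def Qset (a q M : ℝ) : ℝ → Set (ℝ × ℝ) :=
  fun t => if a ≤ t then Icc q M ×ˢ (univ : Set ℝ) else ∅

theorem vf_lip (hγ : 0 < γ) (hα : 0 < α) (hp : 1 < p) {a q M : ℝ}
    (ha : 0 < a) (hq : 0 < q) (hM : 0 ≤ M) :
    ∀ t : ℝ, LipschitzOnWith
      (max 1 (Real.toNNReal (|ω| + γ * a ^ (-α) + p * (M ^ (p-1) + 1)) * 1))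
      (vf γ α ω p t) (Qset a q M t) := by
  intro t
  by_cases hat : a ≤ t
  swap
  · rw [Qset, if_neg hat]
    exact lipschitzOnWith_empty _ _
  rw [Qset, if_pos hat]
  have ht0 : 0 < t := lt_of_lt_of_le ha hat
  have hC0 : 0 ≤ |ω| + γ * a ^ (-α) + p * (M ^ (p-1) + 1) := by
    have h1 : 0 ≤ M ^ (p-1) := Real.rpow_nonneg hM _
    have h2 : 0 ≤ γ * a ^ (-α) := mul_nonneg hγ.le (Real.rpow_nonneg ha.le _)
    have h3 : 0 ≤ |ω| := abs_nonneg ω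
    nlinarith
  have hlipz : LipschitzOnWith (Real.toNNReal (|ω| + γ * a ^ (-α) + p * (M ^ (p-1) + 1)))
      (fun z : ℝ => (ω - γ * t ^ (-α)) * z - z ^ p) (Icc q M) := by
    rw [lipschitzOnWith_iff_dist_le_mul]
    intro x hx y hy
    have himg : ‖((ω - γ * t ^ (-α)) * x - x ^ p) - ((ω - γ * t ^ (-α)) * y - y ^ p)‖
        ≤ (|ω| + γ * a ^ (-α) + p * (M ^ (p-1) + 1)) * ‖x - y‖ := by
      apply Convex.norm_image_sub_le_of_norm_hasDerivWithin_le
        (f' := fun z => (ω - γ * t ^ (-α)) - p * z ^ (p-1)) ?_ ?_ (convex_Icc q M) hy hx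
      · intro z hz
        have hz0 : 0 < z := lt_of_lt_of_le hq hz.1
        have hd1 : HasDerivAt (fun z : ℝ => (ω - γ * t ^ (-α)) * z) (ω - γ * t ^ (-α)) z := by
          simpa using (hasDerivAt_id z).const_mul (ω - γ * t ^ (-α))
        have hd2 : HasDerivAt (fun z : ℝ => z ^ p) (p * z ^ (p-1)) z :=
          Real.hasDerivAt_rpow_const (Or.inl hz0.ne')
        exact (hd1.sub hd2).hasDerivWithinAt
      · intro z hz
        have hz0 : 0 < z := lt_of_lt_of_le hq hz.1
        have hb1 : |ω - γ * t ^ (-α)| ≤ |ω| + γ * a ^ (-α) := by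
          have h3 : t ^ (-α) ≤ a ^ (-α) :=
            Real.rpow_le_rpow_of_nonpos ha hat (neg_nonpos.2 hα.le)
          have h4 : (0:ℝ) ≤ t ^ (-α) := Real.rpow_nonneg ht0.le _
          calc |ω - γ * t ^ (-α)| ≤ |ω| + |γ * t ^ (-α)| := abs_sub_le'' _ _
            _ = |ω| + γ * t ^ (-α) := by rw [abs_of_nonneg (mul_nonneg hγ.le h4)]
            _ ≤ |ω| + γ * a ^ (-α) := by nlinarith
        have hb2 : |p * z ^ (p-1)| ≤ p * (M ^ (p-1) + 1) := by
          have h6 : (0:ℝ) ≤ z ^ (p-1) := Real.rpow_nonneg hz0.le _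
          rw [abs_of_nonneg (mul_nonneg (by linarith) h6)]
          have h5 : z ^ (p-1) ≤ M ^ (p-1) := Real.rpow_le_rpow hz0.le hz.2 (by linarith)
          nlinarith
        calc ‖(ω - γ * t ^ (-α)) - p * z ^ (p-1)‖
            ≤ |ω - γ * t ^ (-α)| + |p * z ^ (p-1)| := by
              rw [Real.norm_eq_abs]; exact abs_sub_le'' _ _
          _ ≤ (|ω| + γ * a ^ (-α)) + p * (M ^ (p-1) + 1) := add_le_add hb1 hb2
    rw [dist_eq_norm, dist_eq_norm]
    calc ‖((ω - γ * t ^ (-α)) * x - x ^ p) - ((ω - γ * t ^ (-α)) * y - y ^ p)‖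
        ≤ (|ω| + γ * a ^ (-α) + p * (M ^ (p-1) + 1)) * ‖x - y‖ := himg
      _ = (Real.toNNReal (|ω| + γ * a ^ (-α) + p * (M ^ (p-1) + 1)) : ℝ) * ‖x - y‖ := by
          rw [Real.coe_toNNReal _ hC0]
  have hsnd : LipschitzOnWith 1 (fun x : ℝ × ℝ => x.2) (Icc q M ×ˢ (univ : Set ℝ)) :=
    LipschitzWith.prod_snd.lipschitzOnWith
  have hfst : LipschitzOnWith 1 (fun x : ℝ × ℝ => x.1) (Icc q M ×ˢ (univ : Set ℝ)) :=
    LipschitzWith.prod_fst.lipschitzOnWith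
  have hmap : MapsTo (fun x : ℝ × ℝ => x.1) (Icc q M ×ˢ (univ : Set ℝ)) (Icc q M) :=
    fun x hx => hx.1
  have hcomp := hlipz.comp hfst hmap
  exact hsnd.prodMk hcomp
theorem tangency_open (hφ : Sol γ α ω p φ) (hψ : Sol γ α ω p ψ)
    (hγ : 0 < γ) (hα : 0 < α) (hp : 1 < p)
    {s₀ : ℝ} (hs₀ : 0 < s₀) (h1 : φ s₀ = ψ s₀) (h2 : deriv φ s₀ = deriv ψ s₀) :
    ∀ᶠ r in nhds s₀, 0 < r ∧ φ r = ψ r ∧ deriv φ r = deriv ψ r := by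
  have hφ0 := hφ.pos s₀ hs₀
  have hψ0 := hψ.pos s₀ hs₀
  set q := min (φ s₀) (ψ s₀) / 2 with hq_def
  set M := max (φ s₀) (ψ s₀) + 1 with hM_def
  have hq : 0 < q := by
    rw [hq_def]
    have := lt_min hφ0 hψ0
    linarith
  have hM : (0:ℝ) ≤ M := by
    rw [hM_def]
    have := le_max_left (φ s₀) (ψ s₀)
    linarith
  have hlip := vf_lip hγ hα hp (show (0:ℝ) < s₀/2 by linarith) hq hM (ω := ω)
  -- eventual membership facts
  have hepφ : ∀ᶠ t in nhds s₀, φ t ∈ Ioo q M := by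
    have hc : ContinuousAt φ s₀ := (hφ.du hs₀).continuousAt
    apply hc.eventually_mem (isOpen_Ioo.mem_nhds _)
    constructor
    · rw [hq_def]; have := min_le_left (φ s₀) (ψ s₀); linarith
    · rw [hM_def]; have := le_max_left (φ s₀) (ψ s₀); linarith
  have hepψ : ∀ᶠ t in nhds s₀, ψ t ∈ Ioo q M := by
    have hc : ContinuousAt ψ s₀ := (hψ.du hs₀).continuousAt
    apply hc.eventually_mem (isOpen_Ioo.mem_nhds _)
    constructor
    · rw [hq_def]; have := min_le_right (φ s₀) (ψ s₀); linarith
    · rw [hM_def]; have := le_max_right (φ s₀) (ψ s₀); linarith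
  have hept : ∀ᶠ t in nhds s₀, s₀/2 < t := eventually_gt_nhds (by linarith)
  have hf : ∀ᶠ t in nhds s₀,
      HasDerivAt (fun r => (φ r, deriv φ r)) (vf γ α ω p t (φ t, deriv φ t)) t ∧
        (φ t, deriv φ t) ∈ Qset (s₀/2) q M t := by
    filter_upwards [hepφ, hept] with t htφ htt
    have ht0 : 0 < t := lt_trans (by linarith) htt
    constructor
    · have hd := (hφ.du ht0).prodMk (hφ.ddu ht0)
      have hv : vf γ α ω p t (φ t, deriv φ t) = (deriv φ t, deriv (deriv φ) t) := by
        show (deriv φ t, (ω - γ * t ^ (-α)) * φ t - φ t ^ p) = _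
        rw [hφ.ode' ht0]
      rw [hv]
      exact hd
    · rw [Qset, if_pos htt.le]
      exact ⟨⟨htφ.1.le, htφ.2.le⟩, mem_univ _⟩
  have hg : ∀ᶠ t in nhds s₀,
      HasDerivAt (fun r => (ψ r, deriv ψ r)) (vf γ α ω p t (ψ t, deriv ψ t)) t ∧
        (ψ t, deriv ψ t) ∈ Qset (s₀/2) q M t := by
    filter_upwards [hepψ, hept] with t htψ htt
    have ht0 : 0 < t := lt_trans (by linarith) htt
    constructor
    · have hd := (hψ.du ht0).prodMk (hψ.ddu ht0)
      have hv : vf γ α ω p t (ψ t, deriv ψ t) = (deriv ψ t, deriv (deriv ψ) t) := by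
        show (deriv ψ t, (ω - γ * t ^ (-α)) * ψ t - ψ t ^ p) = _
        rw [hψ.ode' ht0]
      rw [hv]
      exact hd
    · rw [Qset, if_pos htt.le]
      exact ⟨⟨htψ.1.le, htψ.2.le⟩, mem_univ _⟩
  have heqv := ODE_solution_unique_of_eventually (Eventually.of_forall hlip) hf hg
    (by rw [Prod.ext_iff]; exact ⟨h1, h2⟩)
  have hpos : ∀ᶠ r in nhds s₀, 0 < r := eventually_gt_nhds hs₀
  filter_upwards [heqv, hpos] with r hr hrpos
  have hr' : (φ r, deriv φ r) = (ψ r, deriv ψ r) := hr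
  rw [Prod.ext_iff] at hr'
  exact ⟨hrpos, hr'.1, hr'.2⟩

theorem tangency (hφ : Sol γ α ω p φ) (hψ : Sol γ α ω p ψ)
    (hγ : 0 < γ) (hα : 0 < α) (hp : 1 < p)
    {r₀ : ℝ} (hr₀ : 0 < r₀) (h1 : φ r₀ = ψ r₀) (h2 : deriv φ r₀ = deriv ψ r₀) :
    ∀ r : ℝ, 0 < r → φ r = ψ r := by
  set S := {r : ℝ | 0 < r ∧ φ r = ψ r ∧ deriv φ r = deriv ψ r} with hS_def
  set V := {r : ℝ | 0 < r ∧ ¬(φ r = ψ r ∧ deriv φ r = deriv ψ r)} with hV_def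
  have hSopen : IsOpen S := by
    rw [isOpen_iff_mem_nhds]
    intro x hx
    exact tangency_open hφ hψ hγ hα hp hx.1 hx.2.1 hx.2.2
  have hVopen : IsOpen V := by
    rw [isOpen_iff_mem_nhds]
    intro x hx
    have hx0 : 0 < x := hx.1
    have hcont : ContinuousAt (fun r => (φ r - ψ r, deriv φ r - deriv ψ r)) x :=
      (((hφ.du hx0).continuousAt).sub ((hψ.du hx0).continuousAt)).prodMk
        (((hφ.ddu hx0).continuousAt).sub ((hψ.ddu hx0).continuousAt))
    have hne : (φ x - ψ x, deriv φ x - deriv ψ x) ≠ ((0:ℝ), (0:ℝ)) := by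
      intro h
      rw [Prod.ext_iff] at h
      simp only at h
      exact hx.2 ⟨by linarith [h.1], by linarith [h.2]⟩
    filter_upwards [hcont.eventually_ne hne, eventually_gt_nhds hx0] with r hr hrpos
    refine ⟨hrpos, fun h => hr ?_⟩
    rw [Prod.ext_iff]
    constructor <;> simp [h.1, h.2]
  have hsub : Ioi (0:ℝ) ⊆ S ∪ V := by
    intro r hr
    by_cases h : φ r = ψ r ∧ deriv φ r = deriv ψ r
    · exact Or.inl ⟨hr, h.1, h.2⟩
    · exact Or.inr ⟨hr, h⟩
  intro r hr
  by_contra hcon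
  have hrV : r ∈ Ioi (0:ℝ) ∩ V := ⟨hr, hr, fun h => hcon h.1⟩
  have hrS : r₀ ∈ Ioi (0:ℝ) ∩ S := ⟨hr₀, hr₀, h1, h2⟩
  obtain ⟨x, _, hxS, hxV⟩ := isPreconnected_Ioi S V hSopen hVopen hsub
    ⟨r₀, hrS⟩ ⟨r, hrV⟩
  exact hxV.2 ⟨hxS.2.1, hxS.2.2⟩
theorem sign_const {f : ℝ → ℝ} (hcont : ∀ x : ℝ, 0 < x → ContinuousAt f x)
    (hnz : ∀ x : ℝ, 0 < x → f x ≠ 0) (h1 : f 1 < 0) : ∀ r : ℝ, 0 < r → f r < 0 := by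
  intro r hr
  rcases lt_trichotomy (f r) 0 with h | h | h
  · exact h
  · exact absurd h (hnz r hr)
  · exfalso
    rcases le_total r 1 with hle | hle
    · obtain ⟨c, hc, hc0⟩ := intermediate_value_Icc' hle
        (fun x hx => (hcont x (lt_of_lt_of_le hr hx.1)).continuousWithinAt)
        (⟨h1.le, h.le⟩ : (0:ℝ) ∈ Icc (f 1) (f r))
      exact hnz c (lt_of_lt_of_le hr hc.1) hc0
    · obtain ⟨c, hc, hc0⟩ := intermediate_value_Icc hle
        (fun x hx => (hcont x (lt_of_lt_of_le one_pos hx.1)).continuousWithinAt)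
        (⟨h1.le, h.le⟩ : (0:ℝ) ∈ Icc (f 1) (f r))
      exact hnz c (lt_of_lt_of_le one_pos hc.1) hc0
end UniqAux

/-- Uniqueness (`N = 1`) of positive solutions of `φ'' − (ω − γ r^{−α})φ + φ^p = 0`
vanishing at infinity and with `φ'(r) → 0` as `r → 0⁺`. -/
theorem uniqueness_positive_solution_one_dim
    (γ α ω p : ℝ) (hγ : 0 < γ) (hα : 0 < α ∧ α < 1) (hω : omega0R 1 γ α < ω)
    (hp : 1 < p)
    (φ ψ : ℝ → ℝ)
    (hφ : isPosSol1d γ α ω p φ) (hψ : isPosSol1d γ α ω p ψ)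
    (hφinf : Filter.Tendsto φ Filter.atTop (nhds 0))
    (hψinf : Filter.Tendsto ψ Filter.atTop (nhds 0))
    (hφ0 : Filter.Tendsto (deriv φ) (nhdsWithin 0 (Ioi 0)) (nhds 0))
    (hψ0 : Filter.Tendsto (deriv ψ) (nhdsWithin 0 (Ioi 0)) (nhds 0)) :
    Set.EqOn φ ψ (Ici 0) := by
  obtain ⟨hφc, hφcd, _, hφpos, hφode⟩ := hφ
  obtain ⟨hψc, hψcd, _, hψpos, hψode⟩ := hψ
  have Sφ : UniqAux.Sol γ α ω p φ :=
    ⟨hφc, hφcd, fun r hr => hφpos r hr, fun r hr => hφode r hr, hφinf, hφ0⟩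
  have Sψ : UniqAux.Sol γ α ω p ψ :=
    ⟨hψc, hψcd, fun r hr => hψpos r hr, fun r hr => hψode r hr, hψinf, hψ0⟩
  have hα1 := hα.1
  have hagree : ∀ r : ℝ, 0 < r → φ r = ψ r := by
    by_cases htan : ∃ r : ℝ, 0 < r ∧ φ r = ψ r ∧ deriv φ r = deriv ψ r
    · obtain ⟨r₀, h0, h1, h2⟩ := htan
      exact UniqAux.tangency Sφ Sψ hγ hα1 hp h0 h1 h2
    · push_neg at htan
      exfalso
      by_cases hcross : ∃ r : ℝ, 0 < r ∧ φ r = ψ r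
      · obtain ⟨r₀, h0, h1⟩ := hcross
        rcases lt_trichotomy (deriv φ r₀) (deriv ψ r₀) with h | h | h
        · exact UniqAux.cross Sφ Sψ hγ hα1 hp h0 h1 h htan
        · exact htan r₀ h0 h1 h
        · refine UniqAux.cross Sψ Sφ hγ hα1 hp h0 h1.symm h ?_
          intro r hr he hd
          exact htan r hr he.symm hd.symm
      · push_neg at hcross
        have hδcont : ∀ x : ℝ, 0 < x → ContinuousAt (fun s => φ s - ψ s) x :=
          fun x hx => ((Sφ.du hx).continuousAt).sub ((Sψ.du hx).continuousAt)
        have hδnz : ∀ x : ℝ, 0 < x → (fun s => φ s - ψ s) x ≠ 0 := by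
          intro x hx h
          exact hcross x hx (by simpa [sub_eq_zero] using h)
        rcases lt_trichotomy (φ 1) (ψ 1) with h | h | h
        · apply UniqAux.nocross Sψ Sφ hγ hα1 hp
          intro r hr
          have := UniqAux.sign_const hδcont hδnz (by simpa using sub_neg.2 h) r hr
          simpa [sub_neg] using this
        · exact hcross 1 one_pos h
        · have hδcont' : ∀ x : ℝ, 0 < x → ContinuousAt (fun s => ψ s - φ s) x :=
            fun x hx => ((Sψ.du hx).continuousAt).sub ((Sφ.du hx).continuousAt)
          have hδnz' : ∀ x : ℝ, 0 < x → (fun s => ψ s - φ s) x ≠ 0 := by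
            intro x hx hzz
            have : ψ x - φ x = 0 := hzz
            have h2 : φ x = ψ x := by linarith
            exact hcross x hx h2
          apply UniqAux.nocross Sφ Sψ hγ hα1 hp
          intro r hr
          have := UniqAux.sign_const hδcont' hδnz' (by simpa using sub_neg.2 h) r hr
          simpa [sub_neg] using this
  intro r hrmem
  rcases eq_or_lt_of_le (mem_Ici.1 hrmem) with h0 | h0
  · -- r = 0
    rw [← h0]
    have hφt : Filter.Tendsto φ (nhdsWithin 0 (Ioi 0)) (nhds (φ 0)) :=
      (hφc 0 self_mem_Ici).mono_left (nhdsWithin_mono _ Ioi_subset_Ici_self)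
    have hψt : Filter.Tendsto ψ (nhdsWithin 0 (Ioi 0)) (nhds (ψ 0)) :=
      (hψc 0 self_mem_Ici).mono_left (nhdsWithin_mono _ Ioi_subset_Ici_self)
    have hψt' : Filter.Tendsto φ (nhdsWithin 0 (Ioi 0)) (nhds (ψ 0)) := by
      apply hψt.congr'
      filter_upwards [self_mem_nhdsWithin] with s hs
      exact (hagree s hs).symm
    exact tendsto_nhds_unique hφt hψt'
  · exact hagree r h0

end
end
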